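/- Let f : ℝ⁴ → ℝ be given by f(x,u,p,q) = 3q²/(1+p) on the open set where p ≠ −1. Then the functions a₁(x,u,p) = 1/(1+p), a₂(x,u,p,q) = −q/(1+p)³, a₃(x,u,p) = 1/(1+p)² satisfy on this set the auxiliary system: D_x a₃ = −(1/3) f_q a₃, D_x a₂ = (1/2)(a₂²/a₃) − (1/18) a₃ (2 f_q² + 9 f_p − 3 D_x f_q), and D_x a₁ = (a₂/a₃) a₁. -/
import Mathlib


/-- Partial derivative with respect to the first variable `x`. -/
noncomputable def pX (g : ℝ → ℝ → ℝ → ℝ → ℝ) (x u p q : ℝ) : ℝ :=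
  deriv (fun t => g t u p q) x

/-- Partial derivative with respect to the second variable `u`. -/
noncomputable def pU (g : ℝ → ℝ → ℝ → ℝ → ℝ) (x u p q : ℝ) : ℝ :=
  deriv (fun t => g x t p q) u

/-- Partial derivative with respect to the third variable `p`. -/
noncomputable def pP (g : ℝ → ℝ → ℝ → ℝ → ℝ) (x u p q : ℝ) : ℝ :=
  deriv (fun t => g x u t q) p

/-- Partial derivative with respect to the fourth variable `q`. -/
noncomputable def pQ (g : ℝ → ℝ → ℝ → ℝ → ℝ) (x u p q : ℝ) : ℝ :=
  deriv (fun t => g x u p t) q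

/-- The total derivative operator
`D_x = ∂/∂x + p ∂/∂u + q ∂/∂p + f ∂/∂q` associated with the ODE `u''' = f`. -/
noncomputable def Dx (f g : ℝ → ℝ → ℝ → ℝ → ℝ) : ℝ → ℝ → ℝ → ℝ → ℝ :=
  fun x u p q =>
    pX g x u p q + p * pU g x u p q + q * pP g x u p q + f x u p q * pQ g x u p q

/-- The right hand side of the nonlinear ODE of Example 3.2: `u''' = 3u''²/(1+u')`. -/
noncomputable def f : ℝ → ℝ → ℝ → ℝ → ℝ := fun _x _u p q => 3 * q ^ 2 / (1 + p)

/-- Auxiliary function `a₁(x,u,p) = 1/(1+p)` (viewed as a function of `(x,u,p,q)`). -/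
noncomputable def a1 : ℝ → ℝ → ℝ → ℝ → ℝ := fun _x _u p _q => 1 / (1 + p)

/-- Auxiliary function `a₂(x,u,p,q) = −q/(1+p)³`. -/
noncomputable def a2 : ℝ → ℝ → ℝ → ℝ → ℝ := fun _x _u p q => -q / (1 + p) ^ 3

/-- Auxiliary function `a₃(x,u,p) = 1/(1+p)²`. -/
noncomputable def a3 : ℝ → ℝ → ℝ → ℝ → ℝ := fun _x _u p _q => 1 / (1 + p) ^ 2


private lemma hlin (t : ℝ) : HasDerivAt (fun s : ℝ => 1 + s) 1 t :=
  (hasDerivAt_id t).const_add 1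

private lemma pQ_f (x u p q : ℝ) : pQ f x u p q = 6 * q / (1 + p) := by
  have h : HasDerivAt (fun s : ℝ => 3 * s ^ 2 / (1 + p))
      ((3 : ℝ) * ((2 : ℕ) * q ^ 1) / (1 + p)) q :=
    ((hasDerivAt_pow 2 q).const_mul 3).div_const (1 + p)
  simp only [pQ, f]
  rw [h.deriv]
  push_cast
  ring

/-- For `f(x,u,p,q) = 3q²/(1+p)` of Example 3.2, the functions `a₁, a₂, a₃` satisfy
the auxiliary system `Dₓ a₃ = −(1/3) f_q a₃`,
`Dₓ a₂ = (1/2) a₂²/a₃ − (1/18) a₃ (2 f_q² + 9 f_p − 3 Dₓ f_q)`, `Dₓ a₁ = (a₂/a₃) a₁`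
on the set `p ≠ -1`. -/
theorem auxiliary_system_example2 :
    ∀ x u p q : ℝ, p ≠ -1 →
      Dx f a3 x u p q = -(1 / 3) * pQ f x u p q * a3 x u p q ∧
      Dx f a2 x u p q = (1 / 2) * (a2 x u p q) ^ 2 / a3 x u p q
        - (1 / 18) * a3 x u p q
            * (2 * (pQ f x u p q) ^ 2 + 9 * pP f x u p q - 3 * Dx f (pQ f) x u p q) ∧
      Dx f a1 x u p q = a2 x u p q / a3 x u p q * a1 x u p q := by
  intro x u p q hp
  have h1 : (1 : ℝ) + p ≠ 0 := by intro h; apply hp; linarith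
  have h1n : ∀ n : ℕ, ((1 : ℝ) + p) ^ n ≠ 0 := fun n => pow_ne_zero n h1
  -- derivative of (1+t)^n at p
  have hpow : ∀ n : ℕ, HasDerivAt (fun t : ℝ => (1 + t) ^ n)
      ((n : ℝ) * (1 + p) ^ (n - 1) * 1) p := fun n => (hlin p).pow n
  -- pP f
  have hPf : pP f x u p q = -(3 * q ^ 2) / (1 + p) ^ 2 := by
    have h : HasDerivAt (fun t : ℝ => 3 * q ^ 2 / (1 + t))
        ((0 * (1 + p) - 3 * q ^ 2 * 1) / (1 + p) ^ 2) p :=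
      (hasDerivAt_const p (3 * q ^ 2)).div (hlin p) h1
    simp only [pP, f]
    rw [h.deriv]; ring
  -- pP a3
  have hPa3 : pP a3 x u p q = -2 / (1 + p) ^ 3 := by
    have h : HasDerivAt (fun t : ℝ => 1 / (1 + t) ^ 2)
        ((0 * (1 + p) ^ 2 - 1 * ((2 : ℕ) * (1 + p) ^ (2 - 1) * 1)) / ((1 + p) ^ 2) ^ 2) p :=
      (hasDerivAt_const p 1).div (hpow 2) (h1n 2)
    simp only [pP, a3]
    rw [h.deriv]
    field_simp
    ring
  -- pP a2
  have hPa2 : pP a2 x u p q = 3 * q / (1 + p) ^ 4 := by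
    have h : HasDerivAt (fun t : ℝ => -q / (1 + t) ^ 3)
        ((0 * (1 + p) ^ 3 - -q * ((3 : ℕ) * (1 + p) ^ (3 - 1) * 1)) / ((1 + p) ^ 3) ^ 2) p :=
      (hasDerivAt_const p (-q)).div (hpow 3) (h1n 3)
    simp only [pP, a2]
    rw [h.deriv]
    field_simp
    ring
  -- pQ a2
  have hQa2 : pQ a2 x u p q = -1 / (1 + p) ^ 3 := by
    have h : HasDerivAt (fun t : ℝ => -t / (1 + p) ^ 3)
        (-1 / (1 + p) ^ 3) q := ((hasDerivAt_id q).neg).div_const ((1 + p) ^ 3)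
    simp only [pQ, a2]
    rw [h.deriv]
  -- pP a1
  have hPa1 : pP a1 x u p q = -1 / (1 + p) ^ 2 := by
    have h : HasDerivAt (fun t : ℝ => 1 / (1 + t))
        ((0 * (1 + p) - 1 * 1) / (1 + p) ^ 2) p :=
      (hasDerivAt_const p 1).div (hlin p) h1
    simp only [pP, a1]
    rw [h.deriv]; ring
  -- partials of pQ f, using pQ_f : pQ f x u p q = 6q/(1+p)
  have hfun1 : (fun t => pQ f t u p q) = fun _ : ℝ => 6 * q / (1 + p) := by
    funext t; exact pQ_f t u p q
  have hfun2 : (fun t => pQ f x t p q) = fun _ : ℝ => 6 * q / (1 + p) := by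
    funext t; exact pQ_f x t p q
  have hfun3 : (fun t => pQ f x u t q) = fun t : ℝ => 6 * q / (1 + t) := by
    funext t; exact pQ_f x u t q
  have hfun4 : (fun t => pQ f x u p t) = fun t : ℝ => 6 * t / (1 + p) := by
    funext t; exact pQ_f x u p t
  have hXfq : pX (pQ f) x u p q = 0 := by
    show deriv (fun t => pQ f t u p q) x = 0
    rw [hfun1]; exact deriv_const x _
  have hUfq : pU (pQ f) x u p q = 0 := by
    show deriv (fun t => pQ f x t p q) u = 0
    rw [hfun2]; exact deriv_const u _
  have hPfq : pP (pQ f) x u p q = -(6 * q) / (1 + p) ^ 2 := by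
    have h : HasDerivAt (fun t : ℝ => 6 * q / (1 + t))
        ((0 * (1 + p) - 6 * q * 1) / (1 + p) ^ 2) p :=
      (hasDerivAt_const p (6 * q)).div (hlin p) h1
    show deriv (fun t => pQ f x u t q) p = -(6 * q) / (1 + p) ^ 2
    rw [hfun3, h.deriv]; ring
  have hQfq : pQ (pQ f) x u p q = 6 / (1 + p) := by
    have h : HasDerivAt (fun t : ℝ => 6 * t / (1 + p)) (6 * 1 / (1 + p)) q :=
      (((hasDerivAt_id q).const_mul 6)).div_const (1 + p)
    show deriv (fun t => pQ f x u p t) q = 6 / (1 + p)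
    rw [hfun4, h.deriv]; ring
  -- zero partials of a1, a2, a3 in x, u (and q for a1, a3)
  have hz : ∀ (g : ℝ → ℝ → ℝ → ℝ → ℝ), True := fun _ => trivial
  have hXa3 : pX a3 x u p q = 0 := by simp [pX, a3]
  have hUa3 : pU a3 x u p q = 0 := by simp [pU, a3]
  have hQa3 : pQ a3 x u p q = 0 := by simp [pQ, a3]
  have hXa2 : pX a2 x u p q = 0 := by simp [pX, a2]
  have hUa2 : pU a2 x u p q = 0 := by simp [pU, a2]
  have hXa1 : pX a1 x u p q = 0 := by simp [pX, a1]
  have hUa1 : pU a1 x u p q = 0 := by simp [pU, a1]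
  have hQa1 : pQ a1 x u p q = 0 := by simp [pQ, a1]
  refine ⟨?_, ?_, ?_⟩
  · simp only [Dx, hXa3, hUa3, hPa3, hQa3, pQ_f, f, a3]
    field_simp
    ring
  · simp only [Dx, hXa2, hUa2, hPa2, hQa2, hXfq, hUfq, hPfq, hQfq, pQ_f, hPf, f, a2, a3]
    field_simp
    ring
  · simp only [Dx, hXa1, hUa1, hPa1, hQa1, pQ_f, f, a1, a2, a3]
    field_simp
    ring
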